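/- Every monochromatic transposition of Π that is 11-critical, 12-critical, or 13-critical involves at least one of the elements a_10, a_9, a_8, b_10, b_9, b_8, c_10, c_9, c_8. -/

import Mathlib

/-- An `n`-half-period: a sequence `π_0, …, π_{n(n-1)/2}` of arrangements of `n`
labeled elements in the positions `1, …, n` (recorded by `pos t x` = the position of
element `x` at time `t`), in which consecutive arrangements differ by a transposition
of the elements in two adjacent positions, and the last arrangement is the reverse of
the first. -/
structure HalfPeriod (n : ℕ) where
  pos : ℕ → Fin n → ℕ
  pos_mem : ∀ t, t ≤ n * (n - 1) / 2 → ∀ x, 1 ≤ pos t x ∧ pos t x ≤ n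
  pos_inj : ∀ t, t ≤ n * (n - 1) / 2 → Function.Injective (pos t)
  step : ∀ t, t < n * (n - 1) / 2 → ∃ x y : Fin n,
    pos t y = pos t x + 1 ∧ pos (t + 1) x = pos t x + 1 ∧ pos (t + 1) y = pos t x ∧
    ∀ z, z ≠ x → z ≠ y → pos (t + 1) z = pos t z
  reverse : ∀ x, pos (n * (n - 1) / 2) x = n + 1 - pos 0 x

namespace HalfPeriod

variable {n : ℕ}

/-- The number of transposition steps of an `n`-half-period. -/
def steps (n : ℕ) : ℕ := n * (n - 1) / 2

/-- Element `x` moves (changes position) at step `t`. -/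
def Moved (hp : HalfPeriod n) (t : ℕ) (x : Fin n) : Prop :=
  hp.pos (t + 1) x ≠ hp.pos t x

/-- Step `t` is the transposition of the (distinct) elements `x` and `y`. -/
def SwapsAt (hp : HalfPeriod n) (t : ℕ) (x y : Fin n) : Prop :=
  x ≠ y ∧ hp.Moved t x ∧ hp.Moved t y

/-- Step `t` is an `i`-transposition: it swaps the elements at positions `i` and `i+1`. -/
def GateAt (hp : HalfPeriod n) (t i : ℕ) : Prop :=
  ∃ x y : Fin n, hp.pos t x = i ∧ hp.pos t y = i + 1 ∧
    hp.pos (t + 1) x = i + 1 ∧ hp.pos (t + 1) y = i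

/-- Step `t` is an `i`-critical transposition: an `i`- or an `(n-i)`-transposition. -/
def Critical (hp : HalfPeriod n) (t i : ℕ) : Prop :=
  hp.GateAt t i ∨ hp.GateAt t (n - i)

/-- Step `t` is a `(≤ k)`-critical transposition. -/
def LeCritical (hp : HalfPeriod n) (t k : ℕ) : Prop :=
  ∃ i, 1 ≤ i ∧ i ≤ k ∧ hp.Critical t i

/-- `N_{≤ k}`: the number of `(≤ k)`-critical transpositions of the half-period. -/
noncomputable def NLe (hp : HalfPeriod n) (k : ℕ) : ℕ :=
  {t : ℕ | t < steps n ∧ hp.LeCritical t k}.ncard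

end HalfPeriod
/-- `hp` is a 3-decomposable `30`-half-period, witnessed by the labeling
`A = {a 0, …, a 9}`, `B = {b 0, …, b 9}`, `C = {c 0, …, c 9}` (the element with
1-indexed subscript `j` is `a (j-1)`, etc.): the initial arrangement is
`(a_10, a_9, …, a_1, b_1, …, b_10, c_1, …, c_10)`, every transposition between `A`
and `B` occurs before every transposition between `C` and `A ∪ B`, and every
transposition between `A` and `C` occurs before every transposition between `B`
and `C`. -/
def IsThreeDecompLabeling30 (hp : HalfPeriod 30) (a b c : Fin 10 → Fin 30) : Prop :=
  Function.Injective (Sum.elim a (Sum.elim b c)) ∧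
  (∀ i : Fin 10, hp.pos 0 (a i) = 10 - (i : ℕ)) ∧
  (∀ i : Fin 10, hp.pos 0 (b i) = 11 + (i : ℕ)) ∧
  (∀ i : Fin 10, hp.pos 0 (c i) = 21 + (i : ℕ)) ∧
  (∀ s t, s < HalfPeriod.steps 30 → t < HalfPeriod.steps 30 →
    (∃ i j, hp.SwapsAt s (a i) (b j)) →
    (∃ i x, ((∃ j, x = a j) ∨ (∃ j, x = b j)) ∧ hp.SwapsAt t (c i) x) → s < t) ∧
  (∀ s t, s < HalfPeriod.steps 30 → t < HalfPeriod.steps 30 →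
    (∃ i j, hp.SwapsAt s (a i) (c j)) →
    (∃ i j, hp.SwapsAt t (b i) (c j)) → s < t)

/-- `x` and `y` belong to the same one of the three classes `A`, `B`, `C`. -/
def SameClass (a b c : Fin 10 → Fin 30) (x y : Fin 30) : Prop :=
  (∃ i j, x = a i ∧ y = a j) ∨ (∃ i j, x = b i ∧ y = b j) ∨ (∃ i j, x = c i ∧ y = c j)
/-- The relabeling of `B`: `b_10` is the (unique) element of `B` reaching position `1`
or position `30`, and for `i = 2, …, 10`, `b_{11-i}` is the (unique) element of `B`
reaching position `i` or position `31-i` but reaching neither position `i-1` nor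
position `32-i`. -/
def BLabelSpec (hp : HalfPeriod 30) (b : Fin 10 → Fin 30) : Prop :=
  ∀ j : Fin 10,
    (∃ t ≤ HalfPeriod.steps 30, hp.pos t (b j) = 11 - ((j : ℕ) + 1) ∨
      hp.pos t (b j) = 20 + ((j : ℕ) + 1)) ∧
    ((j : ℕ) + 1 ≤ 9 → ∀ t ≤ HalfPeriod.steps 30,
      hp.pos t (b j) ≠ 10 - ((j : ℕ) + 1) ∧ hp.pos t (b j) ≠ 21 + ((j : ℕ) + 1))


/-!
Every pair of elements is transposed exactly once, so the transpositions at a gate `g` (between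
positions `g` and `g + 1`) can be counted by their lower element. An element moving by one position
per step crosses each gate upwards as often as downwards, up to a correction fixed by where it starts
and ends. Applied to the elements of `A`, and to those of `B` after the first `B`–`C` transposition
(when, by the choice of the labels of `B`, the element `b j` sits at position `10 - j`), this
determines the number of bichromatic transpositions at every gate. Comparing with `N_{≤ 10}` and
`N_{≤ 13}` shows that there are no monochromatic transpositions at gates `≤ 10` or `≥ 20`, and
exactly `36` at the gates `11, 12, 13, 17, 18, 19`.

On the other hand, crossing-balance for the single element `x_m` of a class bounds by `12 - m` the
number of its transpositions with the `x_i`, `i < m`, at the gates `14, 15, 16`; so at least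
`2m - 12` of them happen at the six critical gates. For `m = 7, 8, 9` this gives `12` per class,
hence all `36`, and no critical monochromatic transposition is left for the elements of index `< 7`.
-/

open Finset

theorem card_filter_lt_add_card_inter_Ico (S : Finset ℕ) {a b : ℕ} (hab : a ≤ b) :
    #{g ∈ S | g < a} + #(S ∩ Ico a b) = #{g ∈ S | g < b} := by
  rw [← filter_mem_eq_inter,
    ← card_union_of_disjoint (disjoint_filter.2 fun g _ h h' => by rw [mem_Ico] at h'; omega),
    ← filter_or]
  exact congrArg card (filter_congr fun g _ => by rw [mem_Ico]; omega)

theorem card_filter_lt_succ (S : Finset ℕ) (a : ℕ) :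
    #{g ∈ S | g < a + 1} = #{g ∈ S | g < a} + if a ∈ S then 1 else 0 := by
  rw [card_filter, card_filter, ← sum_ite_eq S a (fun _ => 1), ← sum_add_distrib]
  exact sum_congr rfl fun g _ => by split_ifs <;> omega

theorem card_filter_range_succ (p : ℕ → Prop) [DecidablePred p] (T : ℕ) :
    #{t ∈ range (T + 1) | p t} = #{t ∈ range T | p t} + if p T then 1 else 0 := by
  rw [card_filter, sum_range_succ, ← card_filter]

theorem card_filter_gt_le {k : ℕ} (m : Fin k) (P : Fin k → Prop) [DecidablePred P] :
    #{i | m < i ∧ P i} ≤ k - 1 - m :=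
  (card_le_card fun i hi => by simp_all).trans_eq (Fin.card_Ioi m)

/-- A sequence moving by at most one per step rises through the levels in `S` as often as it
falls through them, up to the correction given by its first and last values. -/
theorem card_rises_add_card_filter_lt {f : ℕ → ℕ} (S : Finset ℕ) {T : ℕ}
    (hf : ∀ t < T, f (t + 1) = f t ∨ f (t + 1) = f t + 1 ∨ f t = f (t + 1) + 1) :
    #{t ∈ range T | f t ∈ S ∧ f (t + 1) = f t + 1} + #{g ∈ S | g < f 0} =
      #{t ∈ range T | f (t + 1) ∈ S ∧ f t = f (t + 1) + 1} + #{g ∈ S | g < f T} := by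
  induction T with
  | zero => simp
  | succ T ih =>
    have ih := ih fun t ht => hf t (by omega)
    rw [card_filter_range_succ, card_filter_range_succ]
    rcases hf T (by omega) with h | h | h
    · simp only [h, show f T ≠ f T + 1 by omega, and_false, if_false] at ih ⊢
      omega
    · simp only [h, card_filter_lt_succ, show f T ≠ f T + 1 + 1 by omega, and_true, and_false,
        if_false]
      split_ifs <;> omega
    · rw [h, card_filter_lt_succ] at ih
      simp only [h, and_true]
      split_ifs at ih ⊢ <;> omega

theorem le_of_forall_succ_ne {f : ℕ → ℕ} {L T : ℕ} (hf : ∀ t < T, f t ≤ f (t + 1) + 1)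
    (h0 : L ≤ f 0) (hne : ∀ t ≤ T, f t + 1 ≠ L) {t : ℕ} (ht : t ≤ T) : L ≤ f t := by
  induction t with
  | zero => exact h0
  | succ t ih =>
    have := ih (by omega)
    have := hf t (by omega)
    have := hne (t + 1) ht
    omega

namespace HalfPeriod

variable {n : ℕ} (hp : HalfPeriod n) {s t T : ℕ} {u v w e : Fin n}

instance (t : ℕ) (x y : Fin n) : Decidable (hp.SwapsAt t x y) :=
  inferInstanceAs
    (Decidable (x ≠ y ∧ hp.pos (t + 1) x ≠ hp.pos t x ∧ hp.pos (t + 1) y ≠ hp.pos t y))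

theorem pos_injective (ht : t ≤ steps n) : Function.Injective (hp.pos t) := hp.pos_inj t ht

theorem one_le_pos (ht : t ≤ steps n) (x : Fin n) : 1 ≤ hp.pos t x := (hp.pos_mem t ht x).1

theorem pos_le (ht : t ≤ steps n) (x : Fin n) : hp.pos t x ≤ n := (hp.pos_mem t ht x).2

theorem pos_lt_of_le_of_ne (ht : t ≤ steps n) (huv : u ≠ v) (h : hp.pos t u ≤ hp.pos t v) :
    hp.pos t u < hp.pos t v :=
  lt_of_le_of_ne h fun h' => huv (hp.pos_injective ht h')

theorem pos_steps (x : Fin n) : hp.pos (steps n) x = n + 1 - hp.pos 0 x := hp.reverse x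

theorem exists_step (ht : t < steps n) :
    ∃ x y, hp.pos t y = hp.pos t x + 1 ∧ hp.pos (t + 1) x = hp.pos t x + 1 ∧
      hp.pos (t + 1) y = hp.pos t x ∧ ∀ z, hp.Moved t z ↔ z = x ∨ z = y := by
  obtain ⟨x, y, h1, h2, h3, h4⟩ := hp.step t ht
  refine ⟨x, y, h1, h2, h3, fun z => ⟨fun hz => ?_, ?_⟩⟩
  · by_contra h
    rw [not_or] at h
    exact hz (h4 z h.1 h.2)
  · rintro (rfl | rfl) <;> simp only [Moved] <;> omega

theorem pos_succ_cases (ht : t < steps n) (x : Fin n) :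
    hp.pos (t + 1) x = hp.pos t x ∨ hp.pos (t + 1) x = hp.pos t x + 1 ∨
      hp.pos t x = hp.pos (t + 1) x + 1 := by
  obtain ⟨y, z, h1, h2, h3, hm⟩ := hp.exists_step ht
  by_cases hx : hp.Moved t x
  · rcases (hm x).1 hx with rfl | rfl <;> omega
  · exact Or.inl (not_not.1 hx)

theorem swapsAt_comm : hp.SwapsAt t u v ↔ hp.SwapsAt t v u := by
  simp only [SwapsAt, ne_comm, and_comm (a := hp.Moved t u)]

theorem eq_or_eq_of_swapsAt (ht : t < steps n) (h : hp.SwapsAt t u v) (hw : hp.Moved t w) :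
    w = u ∨ w = v := by
  obtain ⟨x, y, -, -, -, hm⟩ := hp.exists_step ht
  obtain ⟨huv, hu, hv⟩ := h
  rcases (hm u).1 hu with rfl | rfl <;> rcases (hm v).1 hv with rfl | rfl <;>
    rcases (hm w).1 hw with rfl | rfl <;> simp_all

theorem swapsAt_partner_unique (ht : t < steps n) (h : hp.SwapsAt t u v)
    (h' : hp.SwapsAt t u w) : v = w :=
  ((hp.eq_or_eq_of_swapsAt ht h h'.2.2).resolve_left h'.1.symm).symm

theorem exists_swapsAt_of_moved (ht : t < steps n) (he : hp.Moved t e) :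
    ∃ w, hp.SwapsAt t e w := by
  obtain ⟨x, y, h1, -, -, hm⟩ := hp.exists_step ht
  have hxy : x ≠ y := fun h => by simp [h] at h1
  rcases (hm e).1 he with rfl | rfl
  · exact ⟨y, hxy, he, (hm y).2 (Or.inr rfl)⟩
  · exact ⟨x, hxy.symm, he, (hm x).2 (Or.inl rfl)⟩

theorem exists_pos_zero_lt_swapsAt (ht : t < steps n) :
    ∃ u v, hp.pos 0 u < hp.pos 0 v ∧ hp.SwapsAt t u v := by
  obtain ⟨x, y, h1, -, -, hm⟩ := hp.exists_step ht
  have hxy : x ≠ y := fun h => by simp [h] at h1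
  have hs : hp.SwapsAt t x y := ⟨hxy, (hm x).2 (Or.inl rfl), (hm y).2 (Or.inr rfl)⟩
  rcases le_total (hp.pos 0 x) (hp.pos 0 y) with h | h
  · exact ⟨x, y, hp.pos_lt_of_le_of_ne (Nat.zero_le _) hxy h, hs⟩
  · exact ⟨y, x, hp.pos_lt_of_le_of_ne (Nat.zero_le _) hxy.symm h, hp.swapsAt_comm.1 hs⟩

theorem pos_succ_of_swapsAt (ht : t < steps n) (h : hp.SwapsAt t u v)
    (hlt : hp.pos t u < hp.pos t v) :
    hp.pos t v = hp.pos t u + 1 ∧ hp.pos (t + 1) u = hp.pos t u + 1 ∧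
      hp.pos (t + 1) v = hp.pos t u := by
  obtain ⟨x, y, h1, h2, h3, hm⟩ := hp.exists_step ht
  obtain ⟨huv, hu, hv⟩ := h
  rcases (hm u).1 hu with rfl | rfl <;> rcases (hm v).1 hv with rfl | rfl <;>
    first | exact absurd rfl huv | omega

theorem pos_lt_succ_of_not_swapsAt (ht : t < steps n) (hlt : hp.pos t u < hp.pos t v)
    (hs : ¬ hp.SwapsAt t u v) : hp.pos (t + 1) u < hp.pos (t + 1) v := by
  obtain ⟨x, y, h1, h2, h3, hm⟩ := hp.exists_step ht
  have hinj := hp.pos_injective ht.le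
  have hfix : ∀ z, ¬ hp.Moved t z → hp.pos (t + 1) z = hp.pos t z ∧
      hp.pos t z ≠ hp.pos t x ∧ hp.pos t z ≠ hp.pos t y := by
    intro z hz
    rw [hm, not_or] at hz
    exact ⟨not_not.1 (mt (hm z).1 (by tauto)), fun h => hz.1 (hinj h), fun h => hz.2 (hinj h)⟩
  by_cases hu : hp.Moved t u <;> by_cases hv : hp.Moved t v
  · exact absurd ⟨fun h => by simp [h] at hlt, hu, hv⟩ hs
  · have := hfix v hv
    rcases (hm u).1 hu with rfl | rfl <;> omega
  · have := hfix u hu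
    rcases (hm v).1 hv with rfl | rfl <;> omega
  · have := hfix u hu
    have := hfix v hv
    omega

theorem pos_lt_of_forall_not_swapsAt (hsT : s ≤ T) (hT : T ≤ steps n)
    (hs : hp.pos s u < hp.pos s v) (h : ∀ t, s ≤ t → t < T → ¬ hp.SwapsAt t u v) :
    hp.pos T u < hp.pos T v := by
  induction T, hsT using Nat.le_induction with
  | base => exact hs
  | succ T hsT ih =>
    exact hp.pos_lt_succ_of_not_swapsAt (by omega)
      (ih (by omega) fun t h1 h2 => h t h1 (by omega)) (h T hsT (by omega))

theorem exists_swapsAt (huv : u ≠ v) : ∃ t < steps n, hp.SwapsAt t u v := by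
  wlog h0 : hp.pos 0 u < hp.pos 0 v generalizing u v
  · obtain ⟨t, ht, h⟩ :=
      this huv.symm (hp.pos_lt_of_le_of_ne (Nat.zero_le _) huv.symm (not_lt.1 h0))
    exact ⟨t, ht, hp.swapsAt_comm.1 h⟩
  by_contra! h
  have hlt := hp.pos_lt_of_forall_not_swapsAt (Nat.zero_le _) le_rfl h0 fun t _ => h t
  have hv := hp.pos_le (Nat.zero_le _) v
  rw [pos_steps, pos_steps] at hlt
  omega

def orderedPairs : Finset (Fin n × Fin n) := {p : Fin n × Fin n | hp.pos 0 p.1 < hp.pos 0 p.2}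

theorem card_orderedPairs : #hp.orderedPairs = steps n := by
  have hinj := hp.pos_injective (Nat.zero_le _)
  have hsplit := card_filter_add_card_filter_not (s := (univ : Finset (Fin n)).offDiag)
    (fun p => hp.pos 0 p.1 < hp.pos 0 p.2)
  have hlt : {p ∈ (univ : Finset (Fin n)).offDiag | hp.pos 0 p.1 < hp.pos 0 p.2} =
      hp.orderedPairs := by
    ext p
    simp only [orderedPairs, mem_filter, mem_offDiag, mem_univ, true_and, and_iff_right_iff_imp]
    exact fun h heq => by simp [heq] at h
  have hgt : {p ∈ (univ : Finset (Fin n)).offDiag | ¬ hp.pos 0 p.1 < hp.pos 0 p.2} =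
      ({p | hp.pos 0 p.2 < hp.pos 0 p.1} : Finset (Fin n × Fin n)) := by
    ext p
    simp only [mem_filter, mem_offDiag, mem_univ, true_and, not_lt]
    exact ⟨fun h => hp.pos_lt_of_le_of_ne (Nat.zero_le _) (Ne.symm h.1) h.2,
      fun h => ⟨fun h' => by simp [h'] at h, h.le⟩⟩
  have hswap : #({p | hp.pos 0 p.2 < hp.pos 0 p.1} : Finset (Fin n × Fin n)) =
      #hp.orderedPairs :=
    card_nbij' Prod.swap Prod.swap (by simp [Set.MapsTo, orderedPairs])
      (by simp [Set.MapsTo, orderedPairs]) (fun p _ => p.swap_swap) (fun p _ => p.swap_swap)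
  rw [offDiag_card, hlt, hgt, hswap, card_univ, Fintype.card_fin, ← Nat.mul_sub_one] at hsplit
  unfold steps
  omega

theorem card_filter_swapsAt_le_one (ht : t < steps n) :
    #{p ∈ hp.orderedPairs | hp.SwapsAt t p.1 p.2} ≤ 1 := by
  refine card_le_one.2 fun p hp' q hq => ?_
  simp only [orderedPairs, mem_filter, mem_univ, true_and] at hp' hq
  rcases hp.eq_or_eq_of_swapsAt ht hp'.2 hq.2.2.1 with h | h
  · rw [h] at hq
    exact Prod.ext h.symm (hp.swapsAt_partner_unique ht hp'.2 hq.2)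
  · rw [h] at hq
    have := hp.swapsAt_partner_unique ht (hp.swapsAt_comm.1 hp'.2) hq.2
    rw [← this] at hq
    omega

/-- Each of the `steps n` transpositions transposes one of the `steps n` pairs, and each pair is
transposed at least once since its order gets reversed: so no pair is transposed twice. -/
theorem swapsAt_time_unique (hs : s < steps n) (ht : t < steps n)
    (h : hp.SwapsAt s u v) (h' : hp.SwapsAt t u v) : s = t := by
  wlog h0 : hp.pos 0 u < hp.pos 0 v generalizing u v
  · exact this (hp.swapsAt_comm.1 h) (hp.swapsAt_comm.1 h')
      (hp.pos_lt_of_le_of_ne (Nat.zero_le _) h.1.symm (not_lt.1 h0))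
  let f : Fin n × Fin n → ℕ := fun p => #{t ∈ range (steps n) | hp.SwapsAt t p.1 p.2}
  have hf : ∀ p ∈ hp.orderedPairs, 1 ≤ f p := fun p hp' => by
    obtain ⟨t, ht, h⟩ := hp.exists_swapsAt (u := p.1) (v := p.2) fun h => by
      simp [orderedPairs, h] at hp'
    exact card_pos.2 ⟨t, mem_filter.2 ⟨mem_range.2 ht, h⟩⟩
  have hsum : ∑ p ∈ hp.orderedPairs, f p ≤ ∑ p ∈ hp.orderedPairs, 1 := by
    calc ∑ p ∈ hp.orderedPairs, f p
        = ∑ t ∈ range (steps n), #{p ∈ hp.orderedPairs | hp.SwapsAt t p.1 p.2} := by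
          simp only [f, card_filter]
          exact sum_comm
      _ ≤ ∑ t ∈ range (steps n), 1 :=
          sum_le_sum fun t ht => hp.card_filter_swapsAt_le_one (mem_range.1 ht)
      _ = ∑ p ∈ hp.orderedPairs, 1 := by simp [card_orderedPairs]
  have h1 := (sum_eq_sum_iff_of_le hf).1 (le_antisymm (sum_le_sum hf) hsum) (u, v)
    (by simpa [orderedPairs] using h0)
  exact card_le_one.1 h1.ge s (by simpa using ⟨hs, h⟩) t (by simpa using ⟨ht, h'⟩)

/-- Junk value `0` when `u = v`, a pair that is never transposed. -/
noncomputable def swapTime (u v : Fin n) : ℕ := sInf {t | t < steps n ∧ hp.SwapsAt t u v}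

noncomputable def swapGate (u v : Fin n) : ℕ :=
  min (hp.pos (hp.swapTime u v) u) (hp.pos (hp.swapTime u v) v)

theorem swapTime_comm (u v : Fin n) : hp.swapTime u v = hp.swapTime v u := by
  simp only [swapTime, hp.swapsAt_comm (u := u)]

theorem swapGate_comm (u v : Fin n) : hp.swapGate u v = hp.swapGate v u := by
  rw [swapGate, swapGate, swapTime_comm, min_comm]

theorem swapTime_lt_and_swapsAt (huv : u ≠ v) :
    hp.swapTime u v < steps n ∧ hp.SwapsAt (hp.swapTime u v) u v :=
  Nat.sInf_mem (s := {t | t < steps n ∧ hp.SwapsAt t u v}) (hp.exists_swapsAt huv)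

theorem swapsAt_iff (huv : u ≠ v) (ht : t < steps n) :
    hp.SwapsAt t u v ↔ t = hp.swapTime u v :=
  ⟨fun h => hp.swapsAt_time_unique ht (hp.swapTime_lt_and_swapsAt huv).1 h
      (hp.swapTime_lt_and_swapsAt huv).2,
    fun h => h ▸ (hp.swapTime_lt_and_swapsAt huv).2⟩

section Oriented

variable (h0 : hp.pos 0 u < hp.pos 0 v)
include h0

theorem ne_of_pos_zero_lt : u ≠ v := fun h => by simp [h] at h0

theorem pos_lt_of_le_swapTime (ht : t ≤ hp.swapTime u v) : hp.pos t u < hp.pos t v := by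
  have hs := (hp.swapTime_lt_and_swapsAt (hp.ne_of_pos_zero_lt h0)).1
  exact hp.pos_lt_of_forall_not_swapsAt (Nat.zero_le t) (by omega) h0
    fun s _ hs' hsw => Nat.notMem_of_lt_sInf (lt_of_lt_of_le hs' ht) ⟨by omega, hsw⟩

theorem pos_swapTime :
    hp.pos (hp.swapTime u v) v = hp.pos (hp.swapTime u v) u + 1 ∧
      hp.pos (hp.swapTime u v + 1) u = hp.pos (hp.swapTime u v) u + 1 ∧
      hp.pos (hp.swapTime u v + 1) v = hp.pos (hp.swapTime u v) u :=
  hp.pos_succ_of_swapsAt (hp.swapTime_lt_and_swapsAt (hp.ne_of_pos_zero_lt h0)).1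
    (hp.swapTime_lt_and_swapsAt (hp.ne_of_pos_zero_lt h0)).2 (hp.pos_lt_of_le_swapTime h0 le_rfl)

theorem swapGate_eq : hp.swapGate u v = hp.pos (hp.swapTime u v) u :=
  min_eq_left (by have := hp.pos_swapTime h0; omega)

theorem pos_lt_of_swapTime_lt (h : hp.swapTime u v < t) (ht : t ≤ steps n) :
    hp.pos t v < hp.pos t u := by
  have := hp.pos_swapTime h0
  refine hp.pos_lt_of_forall_not_swapsAt (s := hp.swapTime u v + 1) h ht (by omega)
    fun s h1 h2 hsw => ?_
  have := (hp.swapsAt_iff (hp.ne_of_pos_zero_lt h0) (by omega)).1 (hp.swapsAt_comm.1 hsw)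
  omega

theorem gateAt_swapTime_iff {g : ℕ} :
    hp.GateAt (hp.swapTime u v) g ↔ g = hp.swapGate u v := by
  have hs := hp.swapTime_lt_and_swapsAt (hp.ne_of_pos_zero_lt h0)
  have := hp.pos_swapTime h0
  rw [hp.swapGate_eq h0]
  constructor
  · rintro ⟨x, y, h1, h2, h3, -⟩
    rcases hp.eq_or_eq_of_swapsAt hs.1 hs.2 (w := x) (by simp only [Moved]; omega) with rfl | rfl
    · exact h1.symm
    · omega
  · rintro rfl
    exact ⟨u, v, rfl, this.1, this.2.1, this.2.2⟩

end Oriented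

theorem one_le_swapGate_and_lt (huv : u ≠ v) : 1 ≤ hp.swapGate u v ∧ hp.swapGate u v < n := by
  wlog h0 : hp.pos 0 u < hp.pos 0 v generalizing u v
  · rw [swapGate_comm]
    exact this huv.symm (hp.pos_lt_of_le_of_ne (Nat.zero_le _) huv.symm (not_lt.1 h0))
  have hs := (hp.swapTime_lt_and_swapsAt huv).1
  have := hp.pos_swapTime h0
  have hu := hp.one_le_pos hs.le u
  have hv := hp.pos_le hs.le v
  rw [hp.swapGate_eq h0]
  omega

theorem leCritical_swapTime_iff (h0 : hp.pos 0 u < hp.pos 0 v) {k : ℕ} :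
    hp.LeCritical (hp.swapTime u v) k ↔ hp.swapGate u v ≤ k ∨ n - k ≤ hp.swapGate u v := by
  have := hp.one_le_swapGate_and_lt (hp.ne_of_pos_zero_lt h0)
  constructor
  · rintro ⟨i, hi1, hik, hg | hg⟩ <;> rw [hp.gateAt_swapTime_iff h0] at hg <;> omega
  · rintro (hg | hg)
    · exact ⟨_, this.1, hg, Or.inl ((hp.gateAt_swapTime_iff h0).2 rfl)⟩
    · exact ⟨n - hp.swapGate u v, by omega, by omega,
        Or.inr ((hp.gateAt_swapTime_iff h0).2 (by omega))⟩

theorem swapGate_eq_of_gateAt {g : ℕ} (ht : t < steps n) (h : hp.SwapsAt t u v)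
    (hg : hp.GateAt t g) : hp.swapGate u v = g := by
  wlog h0 : hp.pos 0 u < hp.pos 0 v generalizing u v
  · rw [swapGate_comm]
    exact this (hp.swapsAt_comm.1 h)
      (hp.pos_lt_of_le_of_ne (Nat.zero_le _) h.1.symm (not_lt.1 h0))
  rw [(hp.swapsAt_iff h.1 ht).1 h, hp.gateAt_swapTime_iff h0] at hg
  exact hg.symm

theorem pos_zero_lt_of_swapsAt (ht : t < steps n) (h : hp.SwapsAt t u v)
    (hlt : hp.pos t u < hp.pos t v) : hp.pos 0 u < hp.pos 0 v := by
  by_contra! hle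
  have h0 := hp.pos_lt_of_le_of_ne (Nat.zero_le _) h.1.symm hle
  have := hp.pos_lt_of_le_swapTime h0
    ((hp.swapsAt_iff (hp.ne_of_pos_zero_lt h0) ht).1 (hp.swapsAt_comm.1 h)).le
  omega

noncomputable def monoSwaps {k : ℕ} (x : Fin k → Fin n) (S : Finset ℕ) :
    Finset (Fin k × Fin k) :=
  {p | p.1 < p.2 ∧ hp.swapGate (x p.1) (x p.2) ∈ S}

theorem card_monoSwaps_eq_sum_gt {k : ℕ} (x : Fin k → Fin n) (S : Finset ℕ) :
    #(hp.monoSwaps x S) = ∑ i, #{m | i < m ∧ hp.swapGate (x i) (x m) ∈ S} := by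
  simp only [monoSwaps, card_filter, Fintype.sum_prod_type]

theorem card_monoSwaps_eq_sum_lt {k : ℕ} (x : Fin k → Fin n) (S : Finset ℕ) :
    #(hp.monoSwaps x S) = ∑ m, #{i | i < m ∧ hp.swapGate (x i) (x m) ∈ S} := by
  simp only [monoSwaps, card_filter, Fintype.sum_prod_type_right]

/-- The elements that `e`, moving up, passes at a gate in `S` before time `T`. -/
noncomputable def upPartners (e : Fin n) (S : Finset ℕ) (T : ℕ) : Finset (Fin n) :=
  {w | hp.pos 0 e < hp.pos 0 w ∧ hp.swapTime e w < T ∧ hp.swapGate e w ∈ S}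

/-- The elements that pass `e`, moving up, at a gate in `S` before time `T`. -/
noncomputable def downPartners (e : Fin n) (S : Finset ℕ) (T : ℕ) : Finset (Fin n) :=
  {w | hp.pos 0 w < hp.pos 0 e ∧ hp.swapTime e w < T ∧ hp.swapGate e w ∈ S}

variable (S : Finset ℕ)

theorem card_upPartners (hT : T ≤ steps n) : #(hp.upPartners e S T) =
    #{t ∈ range T | hp.pos t e ∈ S ∧ hp.pos (t + 1) e = hp.pos t e + 1} := by
  refine card_nbij (hp.swapTime e) (fun w hw => ?_) (fun w hw w' hw' h => ?_) fun t ht => ?_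
  · simp only [upPartners, mem_coe, mem_filter, mem_univ, true_and] at hw
    have := hp.pos_swapTime hw.1
    simp only [mem_coe, mem_filter, mem_range]
    exact ⟨hw.2.1, hp.swapGate_eq hw.1 ▸ hw.2.2, this.2.1⟩
  · simp only [upPartners, mem_coe, mem_filter, mem_univ, true_and] at hw hw'
    have hs := hp.swapTime_lt_and_swapsAt (hp.ne_of_pos_zero_lt hw.1)
    have hs' := hp.swapTime_lt_and_swapsAt (hp.ne_of_pos_zero_lt hw'.1)
    exact hp.swapsAt_partner_unique hs.1 hs.2 (h ▸ hs'.2)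
  · simp only [mem_coe, mem_filter, mem_range] at ht
    obtain ⟨hlt, hS, hup⟩ := ht
    obtain ⟨w, hw⟩ := hp.exists_swapsAt_of_moved (t := t) (e := e) (by omega)
      (by simp only [Moved]; omega)
    have hlt' : hp.pos t e < hp.pos t w := by
      by_contra! hle
      have := hp.pos_succ_of_swapsAt (by omega) (hp.swapsAt_comm.1 hw)
        (hp.pos_lt_of_le_of_ne (by omega) hw.1.symm hle)
      omega
    have h0 := hp.pos_zero_lt_of_swapsAt (by omega) hw hlt'
    have hst := (hp.swapsAt_iff hw.1 (by omega)).1 hw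
    refine ⟨w, ?_, hst.symm⟩
    simp only [upPartners, mem_coe, mem_filter, mem_univ, true_and]
    exact ⟨h0, hst ▸ hlt, hp.swapGate_eq h0 ▸ hst ▸ hS⟩

theorem card_downPartners (hT : T ≤ steps n) : #(hp.downPartners e S T) =
    #{t ∈ range T | hp.pos (t + 1) e ∈ S ∧ hp.pos t e = hp.pos (t + 1) e + 1} := by
  refine card_nbij (hp.swapTime e) (fun w hw => ?_) (fun w hw w' hw' h => ?_) fun t ht => ?_
  · simp only [downPartners, mem_coe, mem_filter, mem_univ, true_and] at hw
    have := hp.pos_swapTime hw.1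
    rw [swapTime_comm] at hw ⊢
    rw [swapGate_comm, hp.swapGate_eq hw.1] at hw
    simp only [mem_coe, mem_filter, mem_range]
    exact ⟨hw.2.1, this.2.2 ▸ hw.2.2, by omega⟩
  · simp only [downPartners, mem_coe, mem_filter, mem_univ, true_and] at hw hw'
    have hs := hp.swapTime_lt_and_swapsAt (hp.ne_of_pos_zero_lt hw.1).symm
    have hs' := hp.swapTime_lt_and_swapsAt (hp.ne_of_pos_zero_lt hw'.1).symm
    exact hp.swapsAt_partner_unique hs.1 hs.2 (h ▸ hs'.2)
  · simp only [mem_coe, mem_filter, mem_range] at ht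
    obtain ⟨hlt, hS, hdown⟩ := ht
    obtain ⟨w, hw⟩ := hp.exists_swapsAt_of_moved (t := t) (e := e) (by omega)
      (by simp only [Moved]; omega)
    have hlt' : hp.pos t w < hp.pos t e := by
      by_contra! hle
      have := hp.pos_succ_of_swapsAt (by omega) hw (hp.pos_lt_of_le_of_ne (by omega) hw.1 hle)
      omega
    have h0 := hp.pos_zero_lt_of_swapsAt (by omega) (hp.swapsAt_comm.1 hw) hlt'
    have hst := (hp.swapsAt_iff hw.1 (by omega)).1 hw
    have := hp.pos_swapTime h0
    refine ⟨w, ?_, hst.symm⟩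
    simp only [downPartners, mem_coe, mem_filter, mem_univ, true_and]
    rw [swapGate_comm, hp.swapGate_eq h0, hp.swapTime_comm w e, ← hst]
    rw [hp.swapTime_comm w e, ← hst] at this
    exact ⟨h0, hlt, this.2.2 ▸ hS⟩

theorem card_upPartners_add (hT : T ≤ steps n) :
    #(hp.upPartners e S T) + #{g ∈ S | g < hp.pos 0 e} =
      #(hp.downPartners e S T) + #{g ∈ S | g < hp.pos T e} := by
  rw [hp.card_upPartners S hT, hp.card_downPartners S hT]
  exact card_rises_add_card_filter_lt S fun t ht => hp.pos_succ_cases (by omega) e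

theorem card_upPartners_eq (hT : T ≤ steps n) (h : hp.pos 0 e ≤ hp.pos T e) :
    #(hp.upPartners e S T) =
      #(hp.downPartners e S T) + #(S ∩ Ico (hp.pos 0 e) (hp.pos T e)) := by
  have := hp.card_upPartners_add S hT (e := e)
  rw [← card_filter_lt_add_card_inter_Ico S h] at this
  omega

theorem card_downPartners_eq (hT : T ≤ steps n) (h : hp.pos T e ≤ hp.pos 0 e) :
    #(hp.downPartners e S T) =
      #(hp.upPartners e S T) + #(S ∩ Ico (hp.pos T e) (hp.pos 0 e)) := by
  have := hp.card_upPartners_add S hT (e := e)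
  rw [← card_filter_lt_add_card_inter_Ico S h] at this
  omega

theorem card_upPartners_union {S'} (h : Disjoint S S') :
    #(hp.upPartners e (S ∪ S') T) = #(hp.upPartners e S T) + #(hp.upPartners e S' T) := by
  rw [upPartners, upPartners, upPartners,
    ← card_union_of_disjoint (disjoint_filter.2 fun w _ h1 h2 => disjoint_left.1 h h1.2.2 h2.2.2),
    ← filter_or]
  simp only [mem_union, and_or_left]

theorem NLe_eq_sum_card_upPartners {k : ℕ}
    (hS : ∀ g, 1 ≤ g → g < n → (g ∈ S ↔ g ≤ k ∨ n - k ≤ g)) :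
    hp.NLe k = ∑ e, #(hp.upPartners e S (steps n)) := by
  let P : Finset (Fin n × Fin n) :=
    {p | hp.pos 0 p.1 < hp.pos 0 p.2 ∧ hp.swapTime p.1 p.2 < steps n ∧
      hp.swapGate p.1 p.2 ∈ S}
  have hsum : ∑ e, #(hp.upPartners e S (steps n)) = #P := by
    simp only [P, upPartners, card_filter, Fintype.sum_prod_type]
  have hset : {t | t < steps n ∧ hp.LeCritical t k} = P.image fun p => hp.swapTime p.1 p.2 := by
    ext t
    simp only [Set.mem_ofPred_eq, coe_image, Set.mem_image, mem_coe, P, mem_filter, mem_univ,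
      true_and, Prod.exists]
    constructor
    · rintro ⟨ht, hk⟩
      obtain ⟨u, v, h0, hs⟩ := hp.exists_pos_zero_lt_swapsAt ht
      have hst := (hp.swapsAt_iff (hp.ne_of_pos_zero_lt h0) ht).1 hs
      have := hp.one_le_swapGate_and_lt (hp.ne_of_pos_zero_lt h0)
      rw [hst, hp.leCritical_swapTime_iff h0] at hk
      exact ⟨u, v, ⟨h0, hst ▸ ht, (hS _ this.1 this.2).2 hk⟩, hst.symm⟩
    · rintro ⟨u, v, ⟨h0, ht, hg⟩, rfl⟩
      have := hp.one_le_swapGate_and_lt (hp.ne_of_pos_zero_lt h0)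
      exact ⟨ht, (hp.leCritical_swapTime_iff h0).2 ((hS _ this.1 this.2).1 hg)⟩
  rw [hsum, NLe, hset, Set.ncard_coe_finset, card_image_of_injOn]
  intro p hp' q hq h
  have h : hp.swapTime p.1 p.2 = hp.swapTime q.1 q.2 := h
  simp only [P, mem_coe, mem_filter, mem_univ, true_and] at hp' hq
  have hs := hp.swapTime_lt_and_swapsAt (hp.ne_of_pos_zero_lt hp'.1)
  have hs' := hp.swapTime_lt_and_swapsAt (hp.ne_of_pos_zero_lt hq.1)
  refine card_le_one.1 (hp.card_filter_swapsAt_le_one hs.1) p ?_ q ?_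
  · simpa [orderedPairs] using ⟨hp'.1, hs.2⟩
  · simpa [orderedPairs, h] using ⟨hq.1, hs'.2⟩

noncomputable def bcStart (hp : HalfPeriod 30) (b c : Fin 10 → Fin 30) : ℕ :=
  univ.inf' univ_nonempty fun p : Fin 10 × Fin 10 => hp.swapTime (b p.1) (c p.2)

theorem bcStart_le {hp : HalfPeriod 30} {b c : Fin 10 → Fin 30} (j i : Fin 10) :
    hp.bcStart b c ≤ hp.swapTime (b j) (c i) :=
  inf'_le _ (mem_univ (j, i))

end HalfPeriod

-- The gates of the `(≤ 10)`-critical transpositions of a `30`-half-period, those of the `11`-,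
-- `12`- and `13`-critical ones, and the remaining ones.
def lowGates : Finset ℕ := Icc 1 10 ∪ Icc 20 29

def sixGates : Finset ℕ := {11, 12, 13, 17, 18, 19}

def midGates : Finset ℕ := {14, 15, 16}

section Counting

open HalfPeriod

variable {hp : HalfPeriod 30} {x : Fin 10 → Fin 30}

/-- By `hlow`, the transpositions of `x m` with the `x i`, `i < m`, happen at gates in
`sixGates ∪ midGates`. -/
theorem two_mul_sub_le_card_six (hx : Function.Injective x) (hlow : hp.monoSwaps x lowGates = ∅)
    (m : Fin 10) (hmid : #{i | i < m ∧ hp.swapGate (x i) (x m) ∈ midGates} ≤ 12 - m) :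
    2 * m - 12 ≤ #{i | i < m ∧ hp.swapGate (x i) (x m) ∈ sixGates} := by
  have hsub : ∀ i ∈ Iio m,
      i ∈ ({i | i < m ∧ hp.swapGate (x i) (x m) ∈ sixGates} : Finset _) ∨
        i ∈ ({i | i < m ∧ hp.swapGate (x i) (x m) ∈ midGates} : Finset _) := by
    intro i hi
    rw [mem_Iio] at hi
    have hnot : hp.swapGate (x i) (x m) ∉ lowGates := fun h => by
      simpa [hlow] using (show (i, m) ∈ hp.monoSwaps x lowGates by simp [monoSwaps, hi, h])
    have := hp.one_le_swapGate_and_lt (hx.ne hi.ne)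
    simp only [lowGates, sixGates, midGates, mem_union, mem_filter, mem_univ, true_and, mem_Icc,
      mem_insert, mem_singleton] at hnot ⊢
    omega
  have := (card_le_card fun i hi => mem_union.2 (hsub i hi)).trans (card_union_le _ _)
  rw [Fin.card_Iio] at this
  omega

theorem exists_seven_le_of_swapGate_mem_six
    (H : ∀ i m : Fin 10, i < m → hp.swapGate (x i) (x m) ∈ sixGates → 7 ≤ (m : ℕ))
    {i j : Fin 10} (hij : i ≠ j) (hg : hp.swapGate (x i) (x j) ∈ sixGates) :
    ∃ k : Fin 10, 7 ≤ (k : ℕ) ∧ (k = i ∨ k = j) := by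
  rcases lt_or_gt_of_ne hij with h | h
  · exact ⟨j, H i j h hg, Or.inr rfl⟩
  · exact ⟨i, H j i h (hp.swapGate_comm (x i) (x j) ▸ hg), Or.inl rfl⟩

variable (hcount : ∀ m : Fin 10,
    2 * m - 12 ≤ #{i | i < m ∧ hp.swapGate (x i) (x m) ∈ sixGates})
include hcount

theorem twelve_le_card_monoSwaps_six : 12 ≤ #(hp.monoSwaps x sixGates) := by
  rw [card_monoSwaps_eq_sum_lt]
  calc 12 = ∑ m : Fin 10, (2 * (m : ℕ) - 12) := by decide
    _ ≤ _ := sum_le_sum fun m _ => hcount m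

/-- If the lower bounds `2 m - 12`, which add up to `12`, add up to the number of transpositions
within the class at the gates `sixGates`, then they are all attained. -/
theorem seven_le_of_card_monoSwaps_six_le (hcard : #(hp.monoSwaps x sixGates) ≤ 12)
    {i m : Fin 10} (him : i < m) (hg : hp.swapGate (x i) (x m) ∈ sixGates) : 7 ≤ (m : ℕ) := by
  rw [card_monoSwaps_eq_sum_lt] at hcard
  have hsum : ∑ m : Fin 10, (2 * (m : ℕ) - 12) = 12 := by decide
  have heq := (sum_eq_sum_iff_of_le fun m _ => hcount m).1
    (le_antisymm (sum_le_sum fun m _ => hcount m) (hsum ▸ hcard)) m (mem_univ m)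
  have : 0 < #{i | i < m ∧ hp.swapGate (x i) (x m) ∈ sixGates} :=
    card_pos.2 ⟨i, by simp [him, hg]⟩
  omega

end Counting

namespace IsThreeDecompLabeling30

open HalfPeriod

variable {hp : HalfPeriod 30} {a b c : Fin 10 → Fin 30} (h3 : IsThreeDecompLabeling30 hp a b c)
  (S : Finset ℕ)
include h3

theorem pos_zero_a (i : Fin 10) : hp.pos 0 (a i) = 10 - i := h3.2.1 i

theorem pos_zero_b (i : Fin 10) : hp.pos 0 (b i) = 11 + i := h3.2.2.1 i

theorem pos_zero_c (i : Fin 10) : hp.pos 0 (c i) = 21 + i := h3.2.2.2.1 i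

theorem pos_steps_a (i : Fin 10) : hp.pos (steps 30) (a i) = 21 + i := by
  rw [hp.pos_steps, h3.pos_zero_a]
  omega

theorem pos_steps_b (i : Fin 10) : hp.pos (steps 30) (b i) = 20 - i := by
  rw [hp.pos_steps, h3.pos_zero_b]
  omega

theorem pos_steps_c (i : Fin 10) : hp.pos (steps 30) (c i) = 10 - i := by
  rw [hp.pos_steps, h3.pos_zero_c]
  omega

theorem injective_a : Function.Injective a := h3.1.comp Sum.inl_injective

theorem injective_b : Function.Injective b :=
  h3.1.comp (Sum.inr_injective.comp Sum.inl_injective)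

theorem injective_c : Function.Injective c :=
  h3.1.comp (Sum.inr_injective.comp Sum.inr_injective)

theorem bijective_elim : Function.Bijective (Sum.elim a (Sum.elim b c)) :=
  (Fintype.bijective_iff_injective_and_card _).2 ⟨h3.1, by simp⟩

theorem sum_eq_sum_abc (f : Fin 30 → ℕ) :
    ∑ e, f e = ∑ i, f (a i) + ∑ i, f (b i) + ∑ i, f (c i) := by
  rw [← h3.bijective_elim.sum_comp, Fintype.sum_sum_type, Fintype.sum_sum_type, add_assoc]
  rfl

theorem mem_cases (e : Fin 30) : (∃ i, e = a i) ∨ (∃ i, e = b i) ∨ ∃ i, e = c i := by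
  obtain ⟨s | s | s, rfl⟩ := h3.bijective_elim.2 e <;> simp

theorem exists_eq_a_of_pos_zero_lt {w : Fin 30} {i : Fin 10} (h : hp.pos 0 w < hp.pos 0 (a i)) :
    ∃ m, i < m ∧ w = a m := by
  rcases h3.mem_cases w with ⟨m, rfl⟩ | ⟨m, rfl⟩ | ⟨m, rfl⟩ <;>
    simp only [h3.pos_zero_a, h3.pos_zero_b, h3.pos_zero_c] at h
  · exact ⟨m, Fin.lt_def.2 (by omega), rfl⟩
  all_goals omega

theorem exists_eq_c_of_lt_pos_zero {w : Fin 30} {i : Fin 10} (h : hp.pos 0 (c i) < hp.pos 0 w) :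
    ∃ m, i < m ∧ w = c m := by
  rcases h3.mem_cases w with ⟨m, rfl⟩ | ⟨m, rfl⟩ | ⟨m, rfl⟩ <;>
    simp only [h3.pos_zero_a, h3.pos_zero_b, h3.pos_zero_c] at h
  · omega
  · omega
  · exact ⟨m, Fin.lt_def.2 (by omega), rfl⟩

theorem cases_of_pos_zero_lt_b {w : Fin 30} {j : Fin 10} (h : hp.pos 0 w < hp.pos 0 (b j)) :
    (∃ m, w = a m) ∨ ∃ m, m < j ∧ w = b m := by
  rcases h3.mem_cases w with ⟨m, rfl⟩ | ⟨m, rfl⟩ | ⟨m, rfl⟩ <;>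
    simp only [h3.pos_zero_a, h3.pos_zero_b, h3.pos_zero_c] at h
  · exact Or.inl ⟨m, rfl⟩
  · exact Or.inr ⟨m, Fin.lt_def.2 (by omega), rfl⟩
  · omega

theorem cases_of_lt_pos_zero_b {w : Fin 30} {j : Fin 10} (h : hp.pos 0 (b j) < hp.pos 0 w) :
    (∃ m, j < m ∧ w = b m) ∨ ∃ m, w = c m := by
  rcases h3.mem_cases w with ⟨m, rfl⟩ | ⟨m, rfl⟩ | ⟨m, rfl⟩ <;>
    simp only [h3.pos_zero_a, h3.pos_zero_b, h3.pos_zero_c] at h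
  · omega
  · exact Or.inl ⟨m, Fin.lt_def.2 (by omega), rfl⟩
  · exact Or.inr ⟨m, rfl⟩

theorem pos_zero_a_lt_a {i m : Fin 10} (him : i < m) : hp.pos 0 (a m) < hp.pos 0 (a i) := by
  rw [h3.pos_zero_a, h3.pos_zero_a]
  have : (i : ℕ) < m := him
  omega

theorem pos_zero_b_lt_b {i m : Fin 10} (him : i < m) : hp.pos 0 (b i) < hp.pos 0 (b m) := by
  rw [h3.pos_zero_b, h3.pos_zero_b]
  exact Nat.add_lt_add_left him 11

theorem pos_zero_c_lt_c {i m : Fin 10} (him : i < m) : hp.pos 0 (c i) < hp.pos 0 (c m) := by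
  rw [h3.pos_zero_c, h3.pos_zero_c]
  exact Nat.add_lt_add_left him 21

theorem pos_zero_a_lt_b (i j : Fin 10) : hp.pos 0 (a i) < hp.pos 0 (b j) := by
  rw [h3.pos_zero_a, h3.pos_zero_b]
  omega

theorem pos_zero_b_lt_c (i j : Fin 10) : hp.pos 0 (b i) < hp.pos 0 (c j) := by
  rw [h3.pos_zero_b, h3.pos_zero_c]
  omega

theorem bcStart_lt : hp.bcStart b c < steps 30 :=
  (bcStart_le 0 0).trans_lt
    (hp.swapTime_lt_and_swapsAt (hp.ne_of_pos_zero_lt (h3.pos_zero_b_lt_c 0 0))).1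

theorem swapTime_ab_lt_bcStart (m j : Fin 10) : hp.swapTime (a m) (b j) < hp.bcStart b c := by
  obtain ⟨⟨j', i'⟩, -, h⟩ := exists_mem_eq_inf' (univ_nonempty (α := Fin 10 × Fin 10))
    fun p => hp.swapTime (b p.1) (c p.2)
  have hab := hp.swapTime_lt_and_swapsAt (hp.ne_of_pos_zero_lt (h3.pos_zero_a_lt_b m j))
  have hbc := hp.swapTime_lt_and_swapsAt (hp.ne_of_pos_zero_lt (h3.pos_zero_b_lt_c j' i'))
  rw [bcStart, h]
  exact h3.2.2.2.2.1 _ _ hab.1 hbc.1 ⟨m, j, hab.2⟩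
    ⟨i', b j', Or.inr ⟨j', rfl⟩, hp.swapsAt_comm.1 hbc.2⟩

/-- At time `bcStart` the twenty elements of `A ∪ C` all lie above `b j`. -/
theorem pos_bcStart_b_le (j : Fin 10) : hp.pos (hp.bcStart b c) (b j) ≤ 10 := by
  set T := hp.bcStart b c
  have hT := h3.bcStart_lt.le
  have hinj : Function.Injective (Sum.elim a c) := by
    have : Sum.elim a c = Sum.elim a (Sum.elim b c) ∘ Sum.map id Sum.inr := by
      ext (i | i) <;> rfl
    rw [this]
    exact h3.1.comp (Sum.map_injective.2 ⟨Function.injective_id, Sum.inr_injective⟩)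
  have hmaps : ∀ s : Fin 10 ⊕ Fin 10,
      hp.pos T (Sum.elim a c s) ∈ Icc (hp.pos T (b j) + 1) 30 := by
    rintro (m | i) <;> refine mem_Icc.2 ⟨?_, hp.pos_le hT _⟩
    · exact hp.pos_lt_of_swapTime_lt (h3.pos_zero_a_lt_b m j) (h3.swapTime_ab_lt_bcStart m j) hT
    · exact hp.pos_lt_of_le_swapTime (h3.pos_zero_b_lt_c j i) (bcStart_le j i)
  have := card_le_card_of_injOn (s := univ) _ (fun s _ => hmaps s)
    fun s _ s' _ h => hinj (hp.pos_injective hT h)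
  simp only [card_univ, Fintype.card_sum, Fintype.card_fin, Nat.card_Icc] at this
  omega

theorem card_downPartners_a (i : Fin 10) :
    #(hp.downPartners (a i) S (steps 30)) = #{m | i < m ∧ hp.swapGate (a i) (a m) ∈ S} := by
  rw [← card_image_of_injective _ h3.injective_a]
  congr 1
  ext w
  simp only [downPartners, mem_filter, mem_univ, true_and, mem_image]
  constructor
  · rintro ⟨h0, -, hg⟩
    obtain ⟨m, him, rfl⟩ := h3.exists_eq_a_of_pos_zero_lt h0
    exact ⟨m, ⟨him, hg⟩, rfl⟩
  · rintro ⟨m, ⟨him, hg⟩, rfl⟩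
    have h0 := h3.pos_zero_a_lt_a him
    exact ⟨h0, (hp.swapTime_lt_and_swapsAt (hp.ne_of_pos_zero_lt h0).symm).1, hg⟩

theorem card_upPartners_c (i : Fin 10) :
    #(hp.upPartners (c i) S (steps 30)) = #{m | i < m ∧ hp.swapGate (c i) (c m) ∈ S} := by
  rw [← card_image_of_injective _ h3.injective_c]
  congr 1
  ext w
  simp only [upPartners, mem_filter, mem_univ, true_and, mem_image]
  constructor
  · rintro ⟨h0, -, hg⟩
    obtain ⟨m, him, rfl⟩ := h3.exists_eq_c_of_lt_pos_zero h0
    exact ⟨m, ⟨him, hg⟩, rfl⟩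
  · rintro ⟨m, ⟨him, hg⟩, rfl⟩
    have h0 := h3.pos_zero_c_lt_c him
    exact ⟨h0, (hp.swapTime_lt_and_swapsAt (hp.ne_of_pos_zero_lt h0)).1, hg⟩

theorem card_upPartners_a (i : Fin 10) :
    #(hp.upPartners (a i) S (steps 30)) =
      #{m | i < m ∧ hp.swapGate (a i) (a m) ∈ S} + #(S ∩ Ico (10 - (i : ℕ)) (21 + i)) := by
  rw [hp.card_upPartners_eq S le_rfl (by rw [h3.pos_zero_a, h3.pos_steps_a]; omega),
    h3.card_downPartners_a, h3.pos_zero_a, h3.pos_steps_a]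

theorem card_downPartners_c (i : Fin 10) :
    #(hp.downPartners (c i) S (steps 30)) =
      #{m | i < m ∧ hp.swapGate (c i) (c m) ∈ S} + #(S ∩ Ico (10 - (i : ℕ)) (21 + i)) := by
  rw [hp.card_downPartners_eq S le_rfl (by rw [h3.pos_zero_c, h3.pos_steps_c]; omega),
    h3.card_upPartners_c, h3.pos_zero_c, h3.pos_steps_c]

theorem card_filter_lt_le_upPartners_a (m : Fin 10) :
    #{i | i < m ∧ hp.swapGate (a i) (a m) ∈ S} ≤ #(hp.upPartners (a m) S (steps 30)) := by
  refine card_le_card_of_injOn a (fun i hi => ?_) h3.injective_a.injOn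
  simp only [coe_filter, mem_univ, true_and, Set.mem_ofPred_eq] at hi
  have h0 := h3.pos_zero_a_lt_a hi.1
  simpa [upPartners, hp.swapGate_comm (a m)] using
    ⟨h0, (hp.swapTime_lt_and_swapsAt (hp.ne_of_pos_zero_lt h0)).1, hi.2⟩

theorem card_filter_lt_le_downPartners_c (m : Fin 10) :
    #{i | i < m ∧ hp.swapGate (c i) (c m) ∈ S} ≤ #(hp.downPartners (c m) S (steps 30)) := by
  refine card_le_card_of_injOn c (fun i hi => ?_) h3.injective_c.injOn
  simp only [coe_filter, mem_univ, true_and, Set.mem_ofPred_eq] at hi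
  have h0 := h3.pos_zero_c_lt_c hi.1
  simpa [downPartners, hp.swapGate_comm (c m), hp.swapTime_comm (c m)] using
    ⟨h0, (hp.swapTime_lt_and_swapsAt (hp.ne_of_pos_zero_lt h0)).1, hi.2⟩

theorem card_mid_a_le (m : Fin 10) :
    #{i | i < m ∧ hp.swapGate (a i) (a m) ∈ midGates} ≤ 12 - m :=
  calc _ ≤ #(hp.upPartners (a m) midGates (steps 30)) := h3.card_filter_lt_le_upPartners_a _ m
    _ ≤ (9 - m) + #midGates := by
      rw [h3.card_upPartners_a]
      exact add_le_add (card_filter_gt_le m _) (card_le_card inter_subset_left)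
    _ = 12 - m := by simp [midGates]; omega

theorem card_mid_c_le (m : Fin 10) :
    #{i | i < m ∧ hp.swapGate (c i) (c m) ∈ midGates} ≤ 12 - m :=
  calc _ ≤ #(hp.downPartners (c m) midGates (steps 30)) :=
        h3.card_filter_lt_le_downPartners_c _ m
    _ ≤ (9 - m) + #midGates := by
      rw [h3.card_downPartners_c]
      exact add_le_add (card_filter_gt_le m _) (card_le_card inter_subset_left)
    _ = 12 - m := by simp [midGates]; omega

variable (hb : BLabelSpec hp b)
include hb

theorem ten_sub_le_pos_b (j : Fin 10) {t : ℕ} (ht : t ≤ steps 30) :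
    10 - j ≤ hp.pos t (b j) := by
  by_cases hj : (j : ℕ) ≤ 8
  · refine le_of_forall_succ_ne (f := fun t => hp.pos t (b j)) (fun s hs => ?_)
      (by simp only [h3.pos_zero_b]; omega) (fun s hs => ?_) ht
    · rcases hp.pos_succ_cases hs (b j) with h | h | h <;> omega
    · have := ((hb j).2 (by omega) s hs).1
      omega
  · have := hp.one_le_pos ht (b j)
    omega

/-- The positions of the `b j` are distinct, between `10 - j` and `10`, and these lower bounds add
up to `1 + ⋯ + 10`. -/
theorem pos_bcStart_b (j : Fin 10) : hp.pos (hp.bcStart b c) (b j) = 10 - j := by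
  set T := hp.bcStart b c
  have hT := h3.bcStart_lt.le
  have hinj : Function.Injective fun j => hp.pos T (b j) :=
    (hp.pos_injective hT).comp h3.injective_b
  have himage : univ.image (fun j => hp.pos T (b j)) = Icc 1 10 :=
    eq_of_subset_of_card_le
      (fun p hp' => by
        obtain ⟨j, -, rfl⟩ := mem_image.1 hp'
        exact mem_Icc.2 ⟨hp.one_le_pos hT _, h3.pos_bcStart_b_le j⟩)
      (by rw [card_image_of_injective _ hinj]; simp)
  have hsum : ∑ j : Fin 10, (10 - (j : ℕ)) = ∑ j : Fin 10, hp.pos T (b j) := by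
    rw [← sum_image (f := fun x => x) fun x _ y _ h => hinj h, himage]
    rfl
  exact ((sum_eq_sum_iff_of_le fun j _ => h3.ten_sub_le_pos_b hb j hT).1 hsum j
    (mem_univ j)).symm

theorem swapTime_bb_lt_bcStart {i m : Fin 10} (him : i < m) :
    hp.swapTime (b i) (b m) < hp.bcStart b c := by
  by_contra! hge
  have := hp.pos_lt_of_le_swapTime (h3.pos_zero_b_lt_b him) hge
  rw [h3.pos_bcStart_b hb, h3.pos_bcStart_b hb] at this
  have : (i : ℕ) < m := him
  omega

theorem card_upPartners_b_bcStart (j : Fin 10) :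
    #(hp.upPartners (b j) S (hp.bcStart b c)) = #{m | j < m ∧ hp.swapGate (b j) (b m) ∈ S} := by
  rw [← card_image_of_injective _ h3.injective_b]
  congr 1
  ext w
  simp only [upPartners, mem_filter, mem_univ, true_and, mem_image]
  constructor
  · rintro ⟨h0, ht, hg⟩
    rcases h3.cases_of_lt_pos_zero_b h0 with ⟨m, hjm, rfl⟩ | ⟨i, rfl⟩
    · exact ⟨m, ⟨hjm, hg⟩, rfl⟩
    · exact absurd ht (not_lt.2 (bcStart_le j i))
  · rintro ⟨m, ⟨hjm, hg⟩, rfl⟩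
    exact ⟨h3.pos_zero_b_lt_b hjm, h3.swapTime_bb_lt_bcStart hb hjm, hg⟩

theorem downPartners_b_steps (j : Fin 10) :
    hp.downPartners (b j) S (steps 30) = hp.downPartners (b j) S (hp.bcStart b c) := by
  ext w
  simp only [downPartners, mem_filter, mem_univ, true_and, and_congr_right_iff]
  intro h0
  rw [hp.swapTime_comm]
  refine and_congr_left fun _ => ⟨fun _ => ?_, fun h => h.trans h3.bcStart_lt⟩
  rcases h3.cases_of_pos_zero_lt_b h0 with ⟨m, rfl⟩ | ⟨m, hmj, rfl⟩
  · exact h3.swapTime_ab_lt_bcStart m j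
  · exact h3.swapTime_bb_lt_bcStart hb hmj

theorem card_downPartners_b_bcStart (j : Fin 10) :
    #(hp.downPartners (b j) S (hp.bcStart b c)) =
      #{m | j < m ∧ hp.swapGate (b j) (b m) ∈ S} + #(S ∩ Ico (10 - (j : ℕ)) (11 + j)) := by
  rw [hp.card_downPartners_eq S h3.bcStart_lt.le
      (by rw [h3.pos_zero_b, h3.pos_bcStart_b hb]; omega),
    h3.card_upPartners_b_bcStart S hb, h3.pos_zero_b, h3.pos_bcStart_b hb]

/-- After `bcStart`, `b j` only moves up, from position `10 - j` to position `20 - j`. -/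
theorem card_upPartners_b (j : Fin 10) :
    #(hp.upPartners (b j) S (steps 30)) =
      #{m | j < m ∧ hp.swapGate (b j) (b m) ∈ S} + #(S ∩ Ico (10 - (j : ℕ)) (20 - j)) := by
  have hsteps := hp.card_upPartners_add S le_rfl (e := b j)
  have hstart := hp.card_upPartners_add S h3.bcStart_lt.le (e := b j)
  have hsplit := card_filter_lt_add_card_inter_Ico S (show 10 - (j : ℕ) ≤ 20 - j by omega)
  rw [h3.downPartners_b_steps S hb, h3.pos_steps_b] at hsteps
  rw [h3.pos_bcStart_b hb] at hstart
  rw [← h3.card_upPartners_b_bcStart S hb]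
  omega

theorem card_filter_lt_le_downPartners_b (m : Fin 10) :
    #{i | i < m ∧ hp.swapGate (b i) (b m) ∈ S} ≤
      #(hp.downPartners (b m) S (hp.bcStart b c)) := by
  refine card_le_card_of_injOn b (fun i hi => ?_) h3.injective_b.injOn
  simp only [coe_filter, mem_univ, true_and, Set.mem_ofPred_eq] at hi
  simpa [downPartners, hp.swapGate_comm (b m), hp.swapTime_comm (b m)] using
    ⟨h3.pos_zero_b_lt_b hi.1, h3.swapTime_bb_lt_bcStart hb hi.1, hi.2⟩

theorem card_mid_b_le (m : Fin 10) :
    #{i | i < m ∧ hp.swapGate (b i) (b m) ∈ midGates} ≤ 12 - m :=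
  calc _ ≤ #(hp.downPartners (b m) midGates (hp.bcStart b c)) :=
        h3.card_filter_lt_le_downPartners_b _ hb m
    _ ≤ (9 - m) + #midGates := by
      rw [h3.card_downPartners_b_bcStart _ hb]
      exact add_le_add (card_filter_gt_le m _) (card_le_card inter_subset_left)
    _ = 12 - m := by simp [midGates]; omega

/-- Counted by their lower element, the bichromatic transpositions at the gates in `S` are
determined by the positions of `A` at the start and the end, and of `B` at `bcStart` and at the
end. -/
theorem sum_card_upPartners :
    ∑ e, #(hp.upPartners e S (steps 30)) =
      #(hp.monoSwaps a S) + #(hp.monoSwaps b S) + #(hp.monoSwaps c S) +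
        ∑ i : Fin 10, #(S ∩ Ico (10 - (i : ℕ)) (21 + i)) +
        ∑ j : Fin 10, #(S ∩ Ico (10 - (j : ℕ)) (20 - j)) := by
  simp only [h3.sum_eq_sum_abc, h3.card_upPartners_a, h3.card_upPartners_b S hb,
    h3.card_upPartners_c, card_monoSwaps_eq_sum_gt, sum_add_distrib]
  ring

theorem monoSwaps_low_eq_empty (hN10 : hp.NLe 10 = 165) :
    hp.monoSwaps a lowGates = ∅ ∧ hp.monoSwaps b lowGates = ∅ ∧
      hp.monoSwaps c lowGates = ∅ := by
  have h := hp.NLe_eq_sum_card_upPartners lowGates (k := 10)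
    (fun g _ _ => by simp only [lowGates, mem_union, mem_Icc]; omega)
  rw [hN10, h3.sum_card_upPartners _ hb,
    show ∑ i : Fin 10, #(lowGates ∩ Ico (10 - (i : ℕ)) (21 + i)) = 110 by decide,
    show ∑ j : Fin 10, #(lowGates ∩ Ico (10 - (j : ℕ)) (20 - j)) = 55 by decide] at h
  simp only [← card_eq_zero]
  omega

theorem card_monoSwaps_six (hN10 : hp.NLe 10 = 165) (hN13 : hp.NLe 13 = 291) :
    #(hp.monoSwaps a sixGates) + #(hp.monoSwaps b sixGates) + #(hp.monoSwaps c sixGates) = 36 := by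
  have h10 := hp.NLe_eq_sum_card_upPartners lowGates (k := 10)
    (fun g _ _ => by simp only [lowGates, mem_union, mem_Icc]; omega)
  have h13 := hp.NLe_eq_sum_card_upPartners (lowGates ∪ sixGates) (k := 13)
    (fun g _ _ => by
      simp only [lowGates, sixGates, mem_union, mem_Icc, mem_insert, mem_singleton]
      omega)
  simp only [hp.card_upPartners_union _ (show Disjoint lowGates sixGates by decide),
    sum_add_distrib] at h13
  rw [hN13, ← h10, hN10, h3.sum_card_upPartners _ hb,
    show ∑ i : Fin 10, #(sixGates ∩ Ico (10 - (i : ℕ)) (21 + i)) = 60 by decide,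
    show ∑ j : Fin 10, #(sixGates ∩ Ico (10 - (j : ℕ)) (20 - j)) = 30 by decide] at h13
  omega

theorem seven_le_of_swapGate_mem_six (hN10 : hp.NLe 10 = 165) (hN13 : hp.NLe 13 = 291) :
    (∀ i m : Fin 10, i < m → hp.swapGate (a i) (a m) ∈ sixGates → 7 ≤ (m : ℕ)) ∧
    (∀ i m : Fin 10, i < m → hp.swapGate (b i) (b m) ∈ sixGates → 7 ≤ (m : ℕ)) ∧
    (∀ i m : Fin 10, i < m → hp.swapGate (c i) (c m) ∈ sixGates → 7 ≤ (m : ℕ)) := by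
  obtain ⟨hlowA, hlowB, hlowC⟩ := h3.monoSwaps_low_eq_empty hb hN10
  have hA m := two_mul_sub_le_card_six h3.injective_a hlowA m (h3.card_mid_a_le m)
  have hB m := two_mul_sub_le_card_six h3.injective_b hlowB m (h3.card_mid_b_le hb m)
  have hC m := two_mul_sub_le_card_six h3.injective_c hlowC m (h3.card_mid_c_le m)
  have := h3.card_monoSwaps_six hb hN10 hN13
  have := twelve_le_card_monoSwaps_six hA
  have := twelve_le_card_monoSwaps_six hB
  have := twelve_le_card_monoSwaps_six hC
  exact ⟨fun i m => seven_le_of_card_monoSwaps_six_le hA (by omega),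
    fun i m => seven_le_of_card_monoSwaps_six_le hB (by omega),
    fun i m => seven_le_of_card_monoSwaps_six_le hC (by omega)⟩

end IsThreeDecompLabeling30

/-- Every monochromatic transposition of `Π` that is `11`-, `12`-
or `13`-critical involves at least one of `a_10, a_9, a_8, b_10, b_9, b_8, c_10, c_9, c_8`
(elements with 1-indexed subscript `≥ 8`, i.e. `Fin`-index `≥ 7`). -/
theorem mono_critical_involves_high (hp : HalfPeriod 30) (a b c : Fin 10 → Fin 30)
    (h3 : IsThreeDecompLabeling30 hp a b c)
    (hN1 : ∀ k : ℕ, 1 ≤ k → k ≤ 10 → hp.NLe k = 3 * Nat.choose (k + 1) 2)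
    (hN2 : ∀ k : ℕ, 11 ≤ k → k ≤ 13 →
      hp.NLe k = 3 * Nat.choose (k + 1) 2 + 3 * Nat.choose (k - 9) 2)
    (hb : BLabelSpec hp b) :
    ∀ t, t < HalfPeriod.steps 30 → ∀ x y : Fin 30, hp.SwapsAt t x y →
      SameClass a b c x y →
      (hp.Critical t 11 ∨ hp.Critical t 12 ∨ hp.Critical t 13) →
      ∃ i : Fin 10, 7 ≤ (i : ℕ) ∧
        (x = a i ∨ x = b i ∨ x = c i ∨ y = a i ∨ y = b i ∨ y = c i) := by
  intro t ht x y hs hclass hcrit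
  have hgate : hp.swapGate x y ∈ sixGates := by
    have key g (hg : hp.GateAt t g) := hp.swapGate_eq_of_gateAt ht hs hg
    simp only [sixGates, mem_insert, mem_singleton]
    rcases hcrit with (h | h) | (h | h) | (h | h) <;> have := key _ h <;> omega
  obtain ⟨hA, hB, hC⟩ := h3.seven_le_of_swapGate_mem_six hb
    ((hN1 10 (by norm_num) (by norm_num)).trans (by decide))
    ((hN2 13 (by norm_num) (by norm_num)).trans (by decide))
  rcases hclass with ⟨i, j, rfl, rfl⟩ | ⟨i, j, rfl, rfl⟩ | ⟨i, j, rfl, rfl⟩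
  · obtain ⟨k, hk, rfl | rfl⟩ :=
      exists_seven_le_of_swapGate_mem_six hA (ne_of_apply_ne a hs.1) hgate <;>
      exact ⟨k, hk, by simp⟩
  · obtain ⟨k, hk, rfl | rfl⟩ :=
      exists_seven_le_of_swapGate_mem_six hB (ne_of_apply_ne b hs.1) hgate <;>
      exact ⟨k, hk, by simp⟩
  · obtain ⟨k, hk, rfl | rfl⟩ :=
      exists_seven_le_of_swapGate_mem_six hC (ne_of_apply_ne c hs.1) hgate <;>
      exact ⟨k, hk, by simp⟩
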